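/- arXiv:2108.00025 — 2 statements merged into one kernel-verified Lean document; each statement's English description precedes it below -/
import Mathlib

section
/- Let A and A' be unital C*-algebras, P₁ a nontrivial symmetric projection in A, P₂ = I_A − P₁, A_{jk} = P_j A P_k, and suppose A satisfies (♠): for j ∈ {1,2}, P_j A X = {0} implies X = 0. Fix an integer n ≥ 2 and let φ: A → A' be a bijective map with φ(I_A) = I_{A'} satisfying (•): φ(p_{n*}(A,B,Ξ,…,Ξ)) = p_{n*}(φ(A),φ(B),φ(Ξ),…,φ(Ξ)) for all A, B ∈ A and Ξ ∈ {P₁, P₂, I_A}. Then for any A₁₂ ∈ A₁₂ and B₂₁ ∈ A₂₁ one has φ(A₁₂ + B₂₁) = φ(A₁₂) + φ(B₂₁). -/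
/-!
Let `t` be the preimage of `φ a + φ b` and `d = t - (a + b)`. The map
`(u, v) ↦ p_{n*}(u, v, I, …, I)` is biadditive and preserved by the bijection `φ`, so every `c`
with `p_{n*}(a, c, I, …) = 0` or `p_{n*}(b, c, I, …) = 0` also satisfies `p_{n*}(d, c, I, …) = 0`,
and symmetrically in the other slot. On skew elements `[·, I]_*` is multiplication by `2`, so for
`c = P₁`, `c = P₂` and `c = i (P₁ - P₂)` these conditions say that `d` is self-adjoint, commutes
with `P₁` and anticommutes with `P₁ - P₂`. Hence `(P₁ - P₂) d = 0`, and `d = 0` because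
`(P₁ - P₂)² = I`.
-/

/-- The `*`-Lie product `[x,y]_* = xy - y x*`. -/
def starLie {R : Type*} [Ring R] [StarRing R] (x y : R) : R := x * y - y * star x

/-- `pn n a b xi = p_{n*}(a, b, xi, ..., xi)` (with `n - 2` trailing copies of `xi`). -/
def pn {R : Type*} [Ring R] [StarRing R] (n : ℕ) (a b ξ : R) : R :=
  (fun z => starLie z ξ)^[n - 2] (starLie a b)

open Function

section Bihom

variable {M N : Type*} [AddCommGroup M] [AddCommMonoid N]
  (f : M →+ M →+ M) (g : N →+ N →+ N) {φ : M → N}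

lemma map_zero_of_surjective_of_map_bihom (hφ : Surjective φ)
    (hfg : ∀ a b, φ (f a b) = g (φ a) (φ b)) : φ 0 = 0 := by
  obtain ⟨z, hz⟩ := hφ 0
  rw [← (f z).map_zero, hfg, hz, map_zero, AddMonoidHom.zero_apply]

lemma bihom_sub_add_eq_zero_of_map_eq_add (hφ : Injective φ) (h0 : φ 0 = 0)
    (hfg : ∀ a b, φ (f a b) = g (φ a) (φ b)) {a b t c : M} (ht : φ t = φ a + φ b)
    (hc : f a c = 0 ∨ f b c = 0) : f (t - (a + b)) c = 0 := by
  have hsplit : φ (f t c) = φ (f a c) + φ (f b c) := by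
    rw [hfg, ht, map_add, AddMonoidHom.add_apply, hfg, hfg]
  rw [map_sub, map_add, AddMonoidHom.sub_apply, AddMonoidHom.add_apply, sub_eq_zero]
  rcases hc with h | h
  · rw [h, h0, zero_add] at hsplit
    rw [hφ hsplit, h, zero_add]
  · rw [h, h0, add_zero] at hsplit
    rw [hφ hsplit, h, add_zero]

theorem map_add_of_bijective_of_map_bihom (hφ : Bijective φ)
    (hfg : ∀ a b, φ (f a b) = g (φ a) (φ b)) {a b : M}
    (hsep : ∀ d, (∀ c, f a c = 0 ∨ f b c = 0 → f d c = 0) →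
      (∀ c, f c a = 0 ∨ f c b = 0 → f c d = 0) → d = 0) :
    φ (a + b) = φ a + φ b := by
  obtain ⟨t, ht⟩ := hφ.2 (φ a + φ b)
  have h0 := map_zero_of_surjective_of_map_bihom f g hφ.2 hfg
  suffices t = a + b by rw [← this, ht]
  refine sub_eq_zero.mp (hsep _ (fun c => ?_) (fun c => ?_))
  · exact bihom_sub_add_eq_zero_of_map_eq_add f g hφ.1 h0 hfg ht
  · exact bihom_sub_add_eq_zero_of_map_eq_add f.flip g.flip hφ.1 h0 (fun a b => hfg b a) ht

end Bihom

section Ring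

variable {R : Type*} [Ring R] {p : R}

lemma IsIdempotentElem.mul_mul_mul_one_sub (hp : IsIdempotentElem p) (x : R) :
    p * (p * x * (1 - p)) = p * x * (1 - p) := by
  rw [← mul_assoc, ← mul_assoc, hp.eq]

lemma IsIdempotentElem.mul_mul_one_sub_mul_self (hp : IsIdempotentElem p) (x : R) :
    p * x * (1 - p) * p = 0 := by
  rw [mul_assoc, hp.one_sub_mul_self, mul_zero]

end Ring

section StarRing

variable {R : Type*} [Ring R] [StarRing R]

def starLieHom : R →+ R →+ R :=
  AddMonoidHom.mul - AddMonoidHom.mul.flip.comp (starAddEquiv : R ≃+ R).toAddMonoidHom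

lemma starLieHom_apply (a b : R) : starLieHom a b = starLie a b := rfl

def starLieRight (ξ : R) : AddMonoid.End R := starLieHom.flip ξ

def pnHom (n : ℕ) (ξ : R) : R →+ R →+ R := starLieHom.compr₂ (starLieRight ξ ^ (n - 2))

lemma pnHom_apply (n : ℕ) (ξ a b : R) : pnHom n ξ a b = pn n a b ξ := by
  change (starLieRight ξ ^ (n - 2)) (starLie a b) = _
  rw [AddMonoid.End.coe_pow]
  rfl

lemma pn_eq_zero_of_starLie_eq_zero (n : ℕ) {a b : R} (ξ : R) (h : starLie a b = 0) :
    pn n a b ξ = 0 := by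
  rw [pn, h]
  exact iterate_fixed (by simp [starLie]) _

lemma iterate_starLie_one_of_star_eq_neg (k : ℕ) {w : R} (hw : star w = -w) :
    (fun z => starLie z 1)^[k] w = 2 ^ k • w := by
  induction k generalizing w with
  | zero => simp
  | succ k ih =>
    have h2w : star (2 • w) = -(2 • w) := by rw [star_nsmul, hw, smul_neg]
    rw [iterate_succ_apply, starLie, mul_one, one_mul, hw, sub_neg_eq_add, ← two_nsmul,
      ih h2w, ← mul_nsmul, ← pow_succ']

lemma star_starLie_of_isSelfAdjoint_right (x : R) {y : R} (hy : IsSelfAdjoint y) :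
    star (starLie x y) = -starLie x y := by
  rw [starLie, star_sub, star_mul, star_mul, hy.star_eq, star_star, neg_sub]

lemma star_starLie_of_star_eq_neg_left {x y : R} (hx : star x = -x) (hy : IsSelfAdjoint y) :
    star (starLie x y) = -starLie x y := by
  rw [starLie, star_sub, star_mul, star_mul, hy.star_eq, star_star, hx]
  noncomm_ring

lemma pn_one_of_star_eq_neg (n : ℕ) {a b : R} (h : star (starLie a b) = -starLie a b) :
    pn n a b 1 = 2 ^ (n - 2) • starLie a b :=
  iterate_starLie_one_of_star_eq_neg _ h

lemma starLie_eq_zero_of_pn_one_eq_zero [Module ℂ R] {n : ℕ} {a b : R}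
    (hskew : star (starLie a b) = -starLie a b) (h : pn n a b 1 = 0) : starLie a b = 0 := by
  rw [pn_one_of_star_eq_neg n hskew, ← Nat.cast_smul_eq_nsmul ℂ, smul_eq_zero] at h
  exact h.resolve_left (by simp)

variable {p : R}

lemma starLie_self_eq_zero_of_mul_self_eq_zero (hp : IsSelfAdjoint p) {a : R}
    (hap : a * p = 0) : starLie a p = 0 := by
  rw [starLie, hap, ← hp.star_eq, ← star_mul, hap, star_zero, sub_zero]

lemma IsStarProjection.sub_one_sub_mul_self (hp : IsStarProjection p) :
    (p - (1 - p)) * (p - (1 - p)) = 1 := by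
  rw [sub_mul, mul_sub p, mul_sub (1 - p), hp.isIdempotentElem.eq, hp.mul_one_sub_self,
    hp.one_sub_mul_self, hp.one_sub.isIdempotentElem.eq]
  abel

lemma starLie_smul_I_sub_one_sub_eq_zero [Algebra ℂ R] [StarModule ℂ R]
    (hp : IsStarProjection p) {a : R} (hpa : p * a = a) (hap : a * p = 0) :
    starLie (Complex.I • (p - (1 - p))) a = 0 := by
  have hpa' : (p - (1 - p)) * a = a := by rw [sub_mul, sub_mul, one_mul, hpa, sub_self, sub_zero]
  have hap' : a * (p - (1 - p)) = -a := by rw [mul_sub, mul_sub, mul_one, hap, zero_sub, sub_zero]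
  rw [starLie, star_smul, (hp.isSelfAdjoint.sub hp.one_sub.isSelfAdjoint).star_eq,
    Complex.star_def, Complex.conj_I, smul_mul_assoc, mul_smul_comm, neg_smul, hpa', hap',
    smul_neg, neg_neg, sub_self]

lemma eq_zero_of_pn_one_eq_zero [Algebra ℂ R] [StarModule ℂ R] (hp : IsStarProjection p)
    {n : ℕ} {d : R} (h₁ : pn n d p 1 = 0) (h₂ : pn n d (1 - p) 1 = 0)
    (h₃ : pn n (Complex.I • (p - (1 - p))) d 1 = 0) : d = 0 := by
  have e₁ : d * p = p * star d := sub_eq_zero.mp <| starLie_eq_zero_of_pn_one_eq_zero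
    (star_starLie_of_isSelfAdjoint_right d hp.isSelfAdjoint) h₁
  have e₂ : d * (1 - p) = (1 - p) * star d := sub_eq_zero.mp <| starLie_eq_zero_of_pn_one_eq_zero
    (star_starLie_of_isSelfAdjoint_right d hp.one_sub.isSelfAdjoint) h₂
  have hd : IsSelfAdjoint d := by
    have h := congrArg₂ (· + ·) e₁ e₂
    simp only [← mul_add, ← add_mul, add_sub_cancel, mul_one, one_mul] at h
    exact h.symm
  set s : R := p - (1 - p)
  have hds : d * s = s * d := by
    rw [mul_sub, mul_sub, sub_mul, sub_mul, mul_one, one_mul, e₁, hd.star_eq]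
  have hskew : star (Complex.I • s) = -(Complex.I • s) := by
    rw [star_smul, (hp.isSelfAdjoint.sub hp.one_sub.isSelfAdjoint).star_eq, Complex.star_def,
      Complex.conj_I, neg_smul]
  have hsd : s * d = 0 := by
    have h := starLie_eq_zero_of_pn_one_eq_zero (star_starLie_of_star_eq_neg_left hskew hd) h₃
    rw [starLie, hskew, mul_neg, sub_neg_eq_add, smul_mul_assoc, mul_smul_comm, hds, ← smul_add,
      ← two_smul ℂ, smul_smul, smul_eq_zero] at h
    exact h.resolve_left (by simp)
  calc d = s * s * d := by rw [hp.sub_one_sub_mul_self, one_mul]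
    _ = 0 := by rw [mul_assoc, hsd, mul_zero]

end StarRing

variable {A A' : Type*}
  [NormedRing A] [StarRing A] [CStarRing A] [NormedAlgebra ℂ A]
  [CompleteSpace A] [StarModule ℂ A]
  [NormedRing A'] [StarRing A'] [CStarRing A'] [NormedAlgebra ℂ A']
  [CompleteSpace A'] [StarModule ℂ A']

theorem stmt5_general
    (P₁ : A) (hP₁proj : P₁ * P₁ = P₁) (hP₁star : star P₁ = P₁)
    (P₂ : A) (hP₂ : P₂ = 1 - P₁)
    (n : ℕ)
    (φ : A → A') (hbij : Function.Bijective φ)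
    (hbullet : ∀ a b : A, ∀ Ξ ∈ ({P₁, P₂, 1} : Set A),
      φ (pn n a b Ξ) = pn n (φ a) (φ b) (φ Ξ))
    :
    ∀ a b : A, (∃ x : A, a = P₁ * x * P₂) → (∃ y : A, b = P₂ * y * P₁) →
      φ (a + b) = φ a + φ b := by
  rintro a b ⟨x, rfl⟩ ⟨y, rfl⟩
  subst hP₂
  have hP : IsStarProjection P₁ := ⟨hP₁proj, hP₁star⟩
  have hPa := hP.isIdempotentElem.mul_mul_mul_one_sub x
  have haP := hP.isIdempotentElem.mul_mul_one_sub_mul_self x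
  have hbP := hP.one_sub.isIdempotentElem.mul_mul_one_sub_mul_self y
  rw [sub_sub_cancel] at hbP
  refine map_add_of_bijective_of_map_bihom (pnHom n 1) (pnHom n (φ 1)) hbij
    (fun a b => by simpa only [pnHom_apply] using hbullet a b 1 (by simp)) fun d hl hr => ?_
  simp only [pnHom_apply] at hl hr
  refine eq_zero_of_pn_one_eq_zero hP (hl _ (Or.inl ?_)) (hl _ (Or.inr ?_)) (hr _ (Or.inl ?_))
    <;> apply pn_eq_zero_of_starLie_eq_zero
  · exact starLie_self_eq_zero_of_mul_self_eq_zero hP.isSelfAdjoint haP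
  · exact starLie_self_eq_zero_of_mul_self_eq_zero hP.one_sub.isSelfAdjoint hbP
  · exact starLie_smul_I_sub_one_sub_eq_zero hP hPa haP

theorem stmt5
    (P₁ : A) (hP₁proj : P₁ * P₁ = P₁) (hP₁star : star P₁ = P₁)
    (hP₁ne0 : P₁ ≠ 0) (hP₁ne1 : P₁ ≠ 1)
    (P₂ : A) (hP₂ : P₂ = 1 - P₁)
    (hspade : ∀ Pj ∈ ({P₁, P₂} : Set A), ∀ X : A, (∀ Y : A, Pj * Y * X = 0) → X = 0)
    (n : ℕ) (hn : 2 ≤ n)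
    (φ : A → A') (hbij : Function.Bijective φ) (hunit : φ 1 = 1)
    (hbullet : ∀ a b : A, ∀ Ξ ∈ ({P₁, P₂, 1} : Set A),
      φ (pn n a b Ξ) = pn n (φ a) (φ b) (φ Ξ))
    :
    ∀ a b : A, (∃ x : A, a = P₁ * x * P₂) → (∃ y : A, b = P₂ * y * P₁) →
      φ (a + b) = φ a + φ b :=
  stmt5_general P₁ hP₁proj hP₁star P₂ hP₂ n φ hbij hbullet
end

section
/- Let A and A' be unital C*-algebras, P₁ a nontrivial symmetric projection in A, P₂ = I_A − P₁, and suppose A satisfies (♠): for j ∈ {1,2}, P_j A X = {0} implies X = 0. Fix an integer n ≥ 2 and let φ: A → A' be a bijective map with φ(I_A) = I_{A'}, φ(λA) = λφ(A) for all λ ∈ ℂ, satisfying (•): φ(p_{n*}(A,B,Ξ,…,Ξ)) = p_{n*}(φ(A),φ(B),φ(Ξ),…,φ(Ξ)) for all A, B ∈ A and Ξ ∈ {P₁, P₂, I_A}. Then for all A ∈ A and j ∈ {1,2}: φ(P_j A) = φ(P_j)φ(A) and φ(A P_j) = φ(A)φ(P_j). -/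
variable {A A' : Type*}
  [NormedRing A] [StarRing A] [CStarRing A] [NormedAlgebra ℂ A]
  [CompleteSpace A] [StarModule ℂ A]
  [NormedRing A'] [StarRing A'] [CStarRing A'] [NormedAlgebra ℂ A']
  [CompleteSpace A'] [StarModule ℂ A']

open Complex (I)

section StarModule

variable {M : Type*} [AddCommGroup M] [StarAddMonoid M] [Module ℂ M]

lemma eq_of_sub_star_eq_of_add_star_eq {x y : M} (hsub : x - star x = y - star y)
    (hadd : x + star x = y + star y) : x = y := by
  have h : (2 : ℂ) • x = (2 : ℂ) • y := by
    rw [two_smul, two_smul]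
    calc x + x = (x - star x) + (x + star x) := by abel
      _ = (y - star y) + (y + star y) := by rw [hsub, hadd]
      _ = y + y := by abel
  exact (smul_right_inj two_ne_zero).mp h

lemma I_smul_sub_star [StarModule ℂ M] (a : M) : I • a - star (I • a) = I • (a + star a) := by
  simp [star_smul, smul_add, sub_eq_add_neg]

end StarModule

section StarLie

variable {R : Type*} [Ring R] [StarRing R]

@[simp]
lemma starLie_one (w : R) : starLie w 1 = w - star w := by
  simp [starLie]

lemma starLie_add_right (a b c : R) : starLie a (b + c) = starLie a b + starLie a c := by
  simp only [starLie, mul_add, add_mul]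
  abel

lemma starLie_starLie_one (a b : R) : starLie (starLie a b) 1 = starLie a (b + star b) := by
  simp only [starLie, star_sub, star_mul, star_star, mul_one, one_mul, mul_add, add_mul]
  abel

variable [Algebra ℂ R] [StarModule ℂ R]

lemma starLie_I_smul (a b : R) : starLie (I • a) b = I • (a * b + b * star a) := by
  simp [starLie, star_smul, smul_add, sub_eq_add_neg]

lemma iterate_starLie_one_succ (k : ℕ) (w : R) :
    (fun z => starLie z 1)^[k + 1] w = (2 : ℂ) ^ k • starLie w 1 := by
  induction k with
  | zero => simp
  | succ k ih =>
    rw [Function.iterate_succ_apply', ih, starLie_one (_ • _), star_smul, starLie_one, star_sub,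
      star_star, star_pow, star_ofNat]
    module

end StarLie

section MapStarLie

variable {R S : Type*} [Ring R] [StarRing R] [Algebra ℂ R] [Ring S] [StarRing S] [Algebra ℂ S]
  {φ : R → S}

lemma map_starLie_of_isSelfAdjoint (hsmul : ∀ (c : ℂ) (a : R), φ (c • a) = c • φ a)
    (h : ∀ a b : R, φ (starLie (starLie a b) 1) = starLie (starLie (φ a) (φ b)) 1)
    {b : R} (hb : IsSelfAdjoint b) (hφb : IsSelfAdjoint (φ b)) (a : R) :
    φ (starLie a b) = starLie (φ a) (φ b) := by
  have h2 := h a b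
  rw [starLie_starLie_one, starLie_starLie_one, hb.star_eq, hφb.star_eq, starLie_add_right,
    starLie_add_right, ← two_smul ℂ, ← two_smul ℂ (starLie (φ a) _), hsmul] at h2
  exact (smul_right_inj two_ne_zero).mp h2

lemma map_sub_star (hsmul : ∀ (c : ℂ) (a : R), φ (c • a) = c • φ a) (hunit : φ 1 = 1)
    (h : ∀ a b : R, φ (starLie (starLie a b) 1) = starLie (starLie (φ a) (φ b)) 1) (a : R) :
    φ (a - star a) = φ a - star (φ a) := by
  have hφ1 : IsSelfAdjoint (φ 1) := hunit ▸ .one S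
  simpa [hunit] using map_starLie_of_isSelfAdjoint hsmul h (.one R) hφ1 a

variable [StarModule ℂ R] [StarModule ℂ S]

lemma map_starLie_starLie_one_of_map_pn (hsmul : ∀ (c : ℂ) (a : R), φ (c • a) = c • φ a)
    (hunit : φ 1 = 1) {n : ℕ} (hpn : ∀ a b : R, φ (pn n a b 1) = pn n (φ a) (φ b) 1) (a b : R) :
    φ (starLie (starLie a b) 1) = starLie (starLie (φ a) (φ b)) 1 := by
  cases hn : n - 2 with
  | zero =>
    have hpn' : ∀ a b : R, φ (starLie a b) = starLie (φ a) (φ b) := by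
      simpa only [pn, hn, Function.iterate_zero, id_eq] using hpn
    rw [hpn', hpn', hunit]
  | succ k =>
    have h := hpn a b
    simp only [pn, hn, iterate_starLie_one_succ, hsmul] at h
    exact (smul_right_inj (pow_ne_zero k two_ne_zero)).mp h

lemma map_add_star (hsmul : ∀ (c : ℂ) (a : R), φ (c • a) = c • φ a) (hunit : φ 1 = 1)
    (h : ∀ a b : R, φ (starLie (starLie a b) 1) = starLie (starLie (φ a) (φ b)) 1) (a : R) :
    φ (a + star a) = φ a + star (φ a) := by
  have h2 := map_sub_star hsmul hunit h (I • a)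
  rw [I_smul_sub_star, hsmul, hsmul, I_smul_sub_star] at h2
  exact (smul_right_inj Complex.I_ne_zero).mp h2

lemma map_star (hsmul : ∀ (c : ℂ) (a : R), φ (c • a) = c • φ a) (hunit : φ 1 = 1)
    (h : ∀ a b : R, φ (starLie (starLie a b) 1) = starLie (starLie (φ a) (φ b)) 1) (a : R) :
    φ (star a) = star (φ a) := by
  apply eq_of_sub_star_eq_of_add_star_eq
  · calc φ (star a) - star (φ (star a)) = φ ((-1 : ℂ) • (a - star a)) := by
          rw [← map_sub_star hsmul hunit h, star_star, neg_one_smul, neg_sub]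
      _ = star (φ a) - star (star (φ a)) := by
          rw [hsmul, map_sub_star hsmul hunit h, neg_one_smul, neg_sub, star_star]
  · calc φ (star a) + star (φ (star a)) = φ (a + star a) := by
          rw [← map_add_star hsmul hunit h, star_star, add_comm]
      _ = star (φ a) + star (star (φ a)) := by
          rw [map_add_star hsmul hunit h, star_star, add_comm]

lemma isSelfAdjoint_map_of_isSelfAdjoint (hsmul : ∀ (c : ℂ) (a : R), φ (c • a) = c • φ a)
    (hunit : φ 1 = 1)
    (h : ∀ a b : R, φ (starLie (starLie a b) 1) = starLie (starLie (φ a) (φ b)) 1)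
    {b : R} (hb : IsSelfAdjoint b) : IsSelfAdjoint (φ b) := by
  rw [IsSelfAdjoint, ← map_star hsmul hunit h, hb.star_eq]

lemma map_mul_of_isSelfAdjoint (hsmul : ∀ (c : ℂ) (a : R), φ (c • a) = c • φ a)
    (hunit : φ 1 = 1)
    (h : ∀ a b : R, φ (starLie (starLie a b) 1) = starLie (starLie (φ a) (φ b)) 1)
    {b : R} (hb : IsSelfAdjoint b) (a : R) : φ (a * b) = φ a * φ b := by
  have hφb := isSelfAdjoint_map_of_isSelfAdjoint hsmul hunit h hb
  apply eq_of_sub_star_eq_of_add_star_eq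
  · calc φ (a * b) - star (φ (a * b)) = φ (a * b - star (a * b)) :=
          (map_sub_star hsmul hunit h _).symm
      _ = φ (starLie a b) := by rw [star_mul, hb.star_eq]; rfl
      _ = starLie (φ a) (φ b) := map_starLie_of_isSelfAdjoint hsmul h hb hφb a
      _ = φ a * φ b - star (φ a * φ b) := by rw [star_mul, hφb.star_eq]; rfl
  · apply smul_right_injective S Complex.I_ne_zero
    calc I • (φ (a * b) + star (φ (a * b))) = φ (I • (a * b + star (a * b))) := by
          rw [hsmul, map_add_star hsmul hunit h]
      _ = φ (starLie (I • a) b) := by rw [starLie_I_smul, star_mul, hb.star_eq]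
      _ = starLie (φ (I • a)) (φ b) := map_starLie_of_isSelfAdjoint hsmul h hb hφb _
      _ = I • (φ a * φ b + star (φ a * φ b)) := by
          rw [hsmul, starLie_I_smul, star_mul, hφb.star_eq]

lemma map_mul_of_isSelfAdjoint_left (hsmul : ∀ (c : ℂ) (a : R), φ (c • a) = c • φ a)
    (hunit : φ 1 = 1)
    (h : ∀ a b : R, φ (starLie (starLie a b) 1) = starLie (starLie (φ a) (φ b)) 1)
    {b : R} (hb : IsSelfAdjoint b) (a : R) : φ (b * a) = φ b * φ a := by
  calc φ (b * a) = φ (star (star a * b)) := by rw [star_mul, star_star, hb.star_eq]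
    _ = star (φ (star a) * φ b) := by
        rw [map_star hsmul hunit h, map_mul_of_isSelfAdjoint hsmul hunit h hb]
    _ = φ b * φ a := by
        rw [star_mul, map_star hsmul hunit h, star_star,
          (isSelfAdjoint_map_of_isSelfAdjoint hsmul hunit h hb).star_eq]

end MapStarLie

theorem stmt11_general
    (P₁ : A) (hP₁star : star P₁ = P₁)
    (P₂ : A) (hP₂ : P₂ = 1 - P₁)
    (n : ℕ)
    (φ : A → A') (hunit : φ 1 = 1)
    (hsmul : ∀ (c : ℂ) (a : A), φ (c • a) = c • φ a)
    (hbullet : ∀ a b : A, ∀ Ξ ∈ ({P₁, P₂, 1} : Set A),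
      φ (pn n a b Ξ) = pn n (φ a) (φ b) (φ Ξ))
    :
    ∀ a : A, ∀ Pj ∈ ({P₁, P₂} : Set A),
      φ (Pj * a) = φ Pj * φ a ∧ φ (a * Pj) = φ a * φ Pj := by
  intro a Pj hPj
  have hsa : IsSelfAdjoint Pj := by
    rcases hPj with rfl | rfl
    · exact hP₁star
    · rw [hP₂]
      exact .sub (.one A) hP₁star
  have h := map_starLie_starLie_one_of_map_pn hsmul hunit
    (fun a b => by simpa [hunit] using hbullet a b 1 (by simp))
  exact ⟨map_mul_of_isSelfAdjoint_left hsmul hunit h hsa a,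
    map_mul_of_isSelfAdjoint hsmul hunit h hsa a⟩

theorem stmt11
    (P₁ : A) (hP₁proj : P₁ * P₁ = P₁) (hP₁star : star P₁ = P₁)
    (hP₁ne0 : P₁ ≠ 0) (hP₁ne1 : P₁ ≠ 1)
    (P₂ : A) (hP₂ : P₂ = 1 - P₁)
    (hspade : ∀ Pj ∈ ({P₁, P₂} : Set A), ∀ X : A, (∀ Y : A, Pj * Y * X = 0) → X = 0)
    (n : ℕ) (hn : 2 ≤ n)
    (φ : A → A') (hbij : Function.Bijective φ) (hunit : φ 1 = 1)
    (hsmul : ∀ (c : ℂ) (a : A), φ (c • a) = c • φ a)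
    (hbullet : ∀ a b : A, ∀ Ξ ∈ ({P₁, P₂, 1} : Set A),
      φ (pn n a b Ξ) = pn n (φ a) (φ b) (φ Ξ))
    :
    ∀ a : A, ∀ Pj ∈ ({P₁, P₂} : Set A),
      φ (Pj * a) = φ Pj * φ a ∧ φ (a * Pj) = φ a * φ Pj :=
  stmt11_general P₁ hP₁star P₂ hP₂ n φ hunit hsmul hbullet
end
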